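/- Fix a finite nonempty model set Q and strictly positive prior probabilities μ₀ : Q → ℝ with Σ_{q∈Q} μ₀(q) = 1. On a probability space, let L_ℓ(j) be strictly positive real random variables for each ℓ ≥ 1 and j ∈ Q (the likelihoods), and define the random posterior probabilities recursively by μ_k(j) = L_k(j) μ_{k−1}(j) / Σ_{ℓ'∈Q} L_k(ℓ') μ_{k−1}(ℓ'). Suppose q ∈ Q is such that for every j ≠ q there exists δ_j > 0 with (1/k) Σ_{ℓ=1}^k ln( L_ℓ(j) / L_ℓ(q) ) → −δ_j almost surely as k → ∞ (ergodicity of the log-likelihood-ratio sequences, with δ_j = D(f*‖f^j) − D(f*‖f^q) > 0 for the unique model q of minimum KL divergence from the true model). Then μ_k(q) → 1 almost surely, i.e., the static multiple-model filter converges almost surely to model q; in particular, if q = ∗ is the true model this is almost-sure consistency. (Theorems: Convergence (Static) and Consistency (Static).) -/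
import Mathlib


open MeasureTheory Finset Filter Topology
open scoped ProbabilityTheory

variable {Q : Type*} [Fintype Q]

/-- Random static multiple-model Bayesian posterior update (no mode transitions):
`μ_k(j) = L_k(j) μ_{k−1}(j) / Σ_{ℓ'} L_k(ℓ') μ_{k−1}(ℓ')`, pathwise in `ω`. -/
noncomputable def randomPosterior {Ω : Type*} (μ₀ : Q → ℝ) (L : ℕ → Q → Ω → ℝ) :
    ℕ → Q → Ω → ℝ
  | 0 => fun q _ => μ₀ q
  | k + 1 => fun j ω =>
      L (k + 1) j ω * randomPosterior μ₀ L k j ω /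
        ∑ ℓ' : Q, L (k + 1) ℓ' ω * randomPosterior μ₀ L k ℓ' ω

/-- **Theorems (Convergence (Static) and Consistency (Static)).** If for each `j ≠ q` the
time-averaged log-likelihood ratios converge a.s. to a strictly negative constant `−δ_j`
(ergodicity, with `δ_j = D(f*‖f^j) − D(f*‖f^q) > 0` for the unique model `q` of minimum KL
divergence from the true model), then the static multiple-model filter converges almost
surely to model `q`: `μ_k(q) → 1` a.s. (consistency when `q = ∗` is the true model). -/
theorem almost_sure_convergence_static
    {Ω : Type*} [MeasureSpace Ω] [IsProbabilityMeasure (ℙ : Measure Ω)] [Nonempty Q]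
    (μ₀ : Q → ℝ) (hμ₀ : ∀ q, 0 < μ₀ q) (hsum : ∑ q : Q, μ₀ q = 1)
    (L : ℕ → Q → Ω → ℝ)
    (hL_meas : ∀ ℓ, 1 ≤ ℓ → ∀ j, Measurable (L ℓ j))
    (hL_pos : ∀ ℓ, 1 ≤ ℓ → ∀ j ω, 0 < L ℓ j ω)
    (q : Q)
    (herg : ∀ j : Q, j ≠ q → ∃ δ : ℝ, 0 < δ ∧
      ∀ᵐ ω, Tendsto
        (fun k : ℕ => (1 / (k : ℝ)) * ∑ ℓ ∈ Finset.Icc 1 k, Real.log (L ℓ j ω / L ℓ q ω))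
        atTop (𝓝 (-δ))) :
    ∀ᵐ ω, Tendsto (fun k => randomPosterior μ₀ L k q ω) atTop (𝓝 1) := by
  classical
  choose! δ hδpos hδae using herg
  have hall : ∀ᵐ ω, ∀ j, j ≠ q → Tendsto
      (fun k : ℕ => (1 / (k : ℝ)) * ∑ ℓ ∈ Finset.Icc 1 k, Real.log (L ℓ j ω / L ℓ q ω))
      atTop (𝓝 (-(δ j))) := by
    rw [ae_all_iff]
    intro j
    by_cases h : j = q
    · filter_upwards with ω hj; exact absurd h hj
    · filter_upwards [hδae j h] with ω hω _; exact hω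
  filter_upwards [hall] with ω hω
  set P := randomPosterior μ₀ L with hP
  -- positivity
  have hpos : ∀ k j, 0 < P k j ω := by
    intro k
    induction k with
    | zero => intro j; exact hμ₀ j
    | succ k ih =>
      intro j
      have hden : 0 < ∑ ℓ' : Q, L (k + 1) ℓ' ω * P k ℓ' ω :=
        Finset.sum_pos (fun i _ => mul_pos (hL_pos (k + 1) (Nat.le_add_left 1 k) i ω) (ih i))
          Finset.univ_nonempty
      exact div_pos (mul_pos (hL_pos (k + 1) (Nat.le_add_left 1 k) j ω) (ih j)) hden
  -- sums to one
  have hsumk : ∀ k, ∑ j : Q, P k j ω = 1 := by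
    intro k
    cases k with
    | zero => exact hsum
    | succ k =>
      have hden : 0 < ∑ ℓ' : Q, L (k + 1) ℓ' ω * P k ℓ' ω :=
        Finset.sum_pos (fun i _ => mul_pos (hL_pos (k + 1) (Nat.le_add_left 1 k) i ω)
          (hpos k i)) Finset.univ_nonempty
      show (∑ j : Q, L (k + 1) j ω * P k j ω /
          ∑ ℓ' : Q, L (k + 1) ℓ' ω * P k ℓ' ω) = 1
      rw [← Finset.sum_div, div_self hden.ne']
  -- ratio formula
  have hratio : ∀ k j, P k j ω / P k q ω =
      (μ₀ j / μ₀ q) * ∏ ℓ ∈ Finset.Icc 1 k, (L ℓ j ω / L ℓ q ω) := by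
    intro k
    induction k with
    | zero => intro j; simp [hP, randomPosterior]
    | succ k ih =>
      intro j
      have hden : (∑ ℓ' : Q, L (k + 1) ℓ' ω * P k ℓ' ω) ≠ 0 :=
        (Finset.sum_pos (fun i _ => mul_pos (hL_pos (k + 1) (Nat.le_add_left 1 k) i ω)
          (hpos k i)) Finset.univ_nonempty).ne'
      have hstep : P (k + 1) j ω / P (k + 1) q ω =
          (L (k + 1) j ω / L (k + 1) q ω) * (P k j ω / P k q ω) := by
        show (L (k + 1) j ω * P k j ω / ∑ ℓ' : Q, L (k + 1) ℓ' ω * P k ℓ' ω) /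
            (L (k + 1) q ω * P k q ω / ∑ ℓ' : Q, L (k + 1) ℓ' ω * P k ℓ' ω) = _
        have hq := (hL_pos (k + 1) (Nat.le_add_left 1 k) q ω).ne'
        have hpq := (hpos k q).ne'
        field_simp
      rw [hstep, ih j, Finset.prod_Icc_succ_top (Nat.le_add_left 1 k)]
      ring
  -- each off-ratio tends to 0
  have htend0 : ∀ j, j ≠ q → Tendsto (fun k => P k j ω / P k q ω) atTop (𝓝 0) := by
    intro j hj
    set S : ℕ → ℝ := fun k => ∑ ℓ ∈ Finset.Icc 1 k, Real.log (L ℓ j ω / L ℓ q ω) with hS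
    have hSbot : Tendsto S atTop atBot := by
      have h1 : Tendsto (fun k : ℕ => (k : ℝ) * ((1 / (k : ℝ)) * S k)) atTop atBot :=
        Tendsto.atTop_mul_neg (by linarith [hδpos j hj]) tendsto_natCast_atTop_atTop (hω j hj)
      refine h1.congr' ?_
      filter_upwards [eventually_ge_atTop 1] with k hk
      have : (k : ℝ) ≠ 0 := Nat.cast_ne_zero.mpr (by omega)
      field_simp
    have hprod : ∀ k, ∏ ℓ ∈ Finset.Icc 1 k, (L ℓ j ω / L ℓ q ω) = Real.exp (S k) := by
      intro k
      rw [hS, Real.exp_sum]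
      refine Finset.prod_congr rfl fun ℓ hℓ => ?_
      have h1 : 1 ≤ ℓ := (Finset.mem_Icc.mp hℓ).1
      rw [Real.exp_log (div_pos (hL_pos ℓ h1 j ω) (hL_pos ℓ h1 q ω))]
    have : Tendsto (fun k => (μ₀ j / μ₀ q) * Real.exp (S k)) atTop (𝓝 0) := by
      have := (Real.tendsto_exp_atBot.comp hSbot).const_mul (μ₀ j / μ₀ q)
      simpa using this
    refine this.congr fun k => ?_
    rw [hratio k j, hprod k]
  -- sum of ratios tends to 1
  have hlim : ∀ j : Q, Tendsto (fun k => P k j ω / P k q ω) atTop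
      (𝓝 (if j = q then 1 else 0)) := by
    intro j
    by_cases h : j = q
    · subst h
      simp only [if_pos rfl]
      have : ∀ k, P k j ω / P k j ω = 1 := fun k => div_self (hpos k j).ne'
      simp only [this]
      exact tendsto_const_nhds (x := (1 : ℝ)) (f := atTop (α := ℕ))
    · simpa [h] using htend0 j h
  have hsum_tend : Tendsto (fun k => ∑ j : Q, P k j ω / P k q ω) atTop (𝓝 1) := by
    have := tendsto_finset_sum Finset.univ (fun j _ => hlim j)
    simpa using this
  have key : Tendsto (fun k => (∑ j : Q, P k j ω / P k q ω)⁻¹) atTop (𝓝 1) := by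
    simpa using hsum_tend.inv₀ one_ne_zero
  refine key.congr fun k => ?_
  rw [← Finset.sum_div, hsumk k, one_div, inv_inv]
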